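/- Let β_0, …, β_{n−1} and α_0, …, α_n be complex numbers and set N_E(z) = β_0 + β_1 z + … + β_{n−1} z^{n−1} and D_E(z) = α_0 + α_1 z + … + α_n z^n. Then the polynomials N_f = z·B_n^{♯n}·N_E + A_n·D_E and D_f = z·A_n^{♯n}·N_E + B_n·D_E both have degree at most n if and only if for every ℓ with 0 ≤ ℓ ≤ n−1: Σ_{j=0}^{n−ℓ−1} ( conj(b_{n−ℓ−j−1})·β_{n−j−1} + a_{ℓ+j+1}·α_{n−j} ) = 0. (This is the degree condition of Theorem 1.3: it expresses that the parameter coefficients satisfy (β_{n−1}, …, β_0)ᵀ = −B̃^{−1}A·(α_n, …, α_1)ᵀ, so that f = T_Θ[E] solves the problem RSP_{n,n}.) -/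

import Mathlib

open Polynomial

/-- The pair `(A_j, B_j)` of polynomials from the recursion (1.8a):
`A_0 = γ_n`, `B_0 = 1`, `A_{j+1}(z) = z·A_j(z) + γ_{n-j-1}·B_j(z)`,
`B_{j+1}(z) = z·conj(γ_{n-j-1})·A_j(z) + B_j(z)`. -/
noncomputable def schurAB (γ : ℕ → ℂ) (n : ℕ) : ℕ → Polynomial ℂ × Polynomial ℂ
  | 0 => (C (γ n), 1)
  | j + 1 =>
      (X * (schurAB γ n j).1 + C (γ (n - j - 1)) * (schurAB γ n j).2,
       X * C (starRingEnd ℂ (γ (n - j - 1))) * (schurAB γ n j).1 + (schurAB γ n j).2)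

/-- The reflection `P^{♯k}`: the coefficient of `z^j` is `conj` of the coefficient of
`z^{k-j}` of `P`, i.e. `P^{♯k}(z) = z^k · conj(P(1/conj z))` for `P` of degree ≤ k. -/
noncomputable def sharp (k : ℕ) (P : Polynomial ℂ) : Polynomial ℂ :=
  ∑ j ∈ Finset.range (k + 1), C (starRingEnd ℂ (P.coeff (k - j))) * X ^ j

/-!
The coefficient of `z^(n+1+ℓ)` in `N_f` is exactly the `ℓ`-th sum, and `N_f` has degree at most
`2n`, so the sums all vanish iff `deg N_f ≤ n`. The recursion gives `B_n B_n^♯ - A_n A_n^♯ = c z^n`,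
hence `D_f B_n^♯ = N_f A_n^♯ + c z^n D_E`; since `B_n(0) = 1`, the reflection `B_n^♯` has degree
exactly `n`, so `deg N_f ≤ n` already forces `deg D_f ≤ n`.
-/

open Finset

namespace Polynomial

variable {R : Type*} [Semiring R]

theorem coeff_sum_C_mul_X_pow (f : ℕ → R) (m i : ℕ) :
    (∑ j ∈ range m, C (f j) * X ^ j).coeff i = if i < m then f i else 0 := by
  simp only [finsetSum_coeff, coeff_C_mul_X_pow, sum_ite_eq, mem_range]

theorem natDegree_sum_C_mul_X_pow_le (f : ℕ → R) (m : ℕ) :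
    (∑ j ∈ range (m + 1), C (f j) * X ^ j).natDegree ≤ m := by
  rw [natDegree_le_iff_coeff_eq_zero]
  intro i hi
  rw [coeff_sum_C_mul_X_pow, if_neg (by omega)]

theorem natDegree_X_mul_sum_C_mul_X_pow_le (f : ℕ → R) (m : ℕ) :
    (X * ∑ j ∈ range m, C (f j) * X ^ j).natDegree ≤ m := by
  rw [natDegree_le_iff_coeff_eq_zero]
  rintro (_ | i) hi
  · omega
  · rw [coeff_X_mul, coeff_sum_C_mul_X_pow, if_neg (by omega)]

theorem coeff_mul_add_of_natDegree_le {P Q : R[X]} {p q k : ℕ} (hP : P.natDegree ≤ p)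
    (hQ : Q.natDegree ≤ q) (hpq : p ≤ q + k) :
    (P * Q).coeff (q + k) = ∑ i ∈ range (p + 1 - k), P.coeff (k + i) * Q.coeff (q - i) := by
  have hsub : Ico k (p + 1) ⊆ range (q + k + 1) := fun x hx => by
    simp only [mem_Ico, mem_range] at hx ⊢; omega
  have hzero : ∀ x ∈ range (q + k + 1), x ∉ Ico k (p + 1) →
      P.coeff x * Q.coeff (q + k - x) = 0 := fun x _ hx => by
    simp only [mem_Ico, not_and_or, not_le, not_lt] at hx
    rcases hx with hx | hx
    · rw [coeff_eq_zero_of_natDegree_lt (p := Q) (by omega), mul_zero]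
    · rw [coeff_eq_zero_of_natDegree_lt (p := P) (by omega), zero_mul]
  rw [coeff_mul, Nat.sum_antidiagonal_eq_sum_range_succ (fun x y => P.coeff x * Q.coeff y),
    ← sum_subset hsub hzero, sum_Ico_eq_sum_range]
  refine sum_congr rfl fun i _ => ?_
  rw [show q + k - (k + i) = q - i by omega]

theorem natDegree_le_iff_coeff_add_eq_zero {P : R[X]} {n m : ℕ} (hP : P.natDegree ≤ n + m) :
    P.natDegree ≤ n ↔ ∀ ℓ < m, P.coeff (n + 1 + ℓ) = 0 := by
  refine ⟨fun h ℓ _ => coeff_eq_zero_of_natDegree_lt (by omega), fun h => ?_⟩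
  rw [natDegree_le_iff_coeff_eq_zero]
  intro i hi
  rcases le_or_gt i (n + m) with hle | hgt
  · simpa [show n + 1 + (i - n - 1) = i by omega] using h (i - n - 1) (by omega)
  · exact coeff_eq_zero_of_natDegree_lt (by omega)

theorem natDegree_le_of_natDegree_mul_le [NoZeroDivisors R] {F S : R[X]} {n : ℕ}
    (hS : S ≠ 0) (h : (F * S).natDegree ≤ n + S.natDegree) : F.natDegree ≤ n := by
  rcases eq_or_ne F 0 with rfl | hF
  · simp
  · rw [natDegree_mul hF hS] at h; omega

end Polynomial

theorem coeff_sharp (k : ℕ) (P : ℂ[X]) (i : ℕ) :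
    (sharp k P).coeff i = if i ≤ k then starRingEnd ℂ (P.coeff (k - i)) else 0 := by
  simp only [sharp, coeff_sum_C_mul_X_pow, Nat.lt_succ_iff]

theorem coeff_sharp_self (k : ℕ) (P : ℂ[X]) :
    (sharp k P).coeff k = starRingEnd ℂ (P.coeff 0) := by
  rw [coeff_sharp, if_pos le_rfl, Nat.sub_self]

theorem natDegree_sharp_le (k : ℕ) (P : ℂ[X]) : (sharp k P).natDegree ≤ k := by
  rw [natDegree_le_iff_coeff_eq_zero]
  intro i hi
  rw [coeff_sharp, if_neg (by omega)]

theorem sharp_C_mul (k : ℕ) (c : ℂ) (P : ℂ[X]) :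
    sharp k (C c * P) = C (starRingEnd ℂ c) * sharp k P := by
  ext i
  simp only [coeff_sharp, coeff_C_mul, map_mul, mul_ite, mul_zero]

theorem sharp_X_mul_add_C_mul {j : ℕ} {P Q : ℂ[X]} (hP : P.natDegree ≤ j)
    (hQ : Q.natDegree ≤ j) (c : ℂ) :
    sharp (j + 1) (X * P + C c * Q) = sharp j P + C (starRingEnd ℂ c) * (X * sharp j Q) := by
  ext (_ | i)
  · have hQ0 : Q.coeff (j + 1) = 0 := coeff_eq_zero_of_natDegree_lt (by omega)
    simp [coeff_sharp, coeff_X_mul, hQ0, mul_coeff_zero]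
  · simp only [coeff_add, coeff_C_mul, coeff_X_mul, coeff_sharp]
    rcases Nat.lt_trichotomy i j with hlt | rfl | hgt
    · rw [if_pos (by omega), if_pos (by omega), if_pos (by omega),
        show j + 1 - (i + 1) = j - (i + 1) + 1 by omega, coeff_X_mul,
        show j - (i + 1) + 1 = j - i by omega, map_add, map_mul]
    · simp
    · rw [if_neg (by omega), if_neg (by omega), if_neg (by omega), mul_zero, add_zero]

section SchurAB

variable (γ : ℕ → ℂ) (n : ℕ)

theorem natDegree_schurAB_le :
    ∀ j, (schurAB γ n j).1.natDegree ≤ j ∧ (schurAB γ n j).2.natDegree ≤ j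
  | 0 => by simp [schurAB]
  | j + 1 => by
    obtain ⟨hA, hB⟩ := natDegree_schurAB_le j
    have hXA : (X * (schurAB γ n j).1).natDegree ≤ j + 1 :=
      natDegree_mul_le_of_le natDegree_X_le hA |>.trans (by omega)
    refine ⟨natDegree_add_le_of_degree_le hXA ?_, natDegree_add_le_of_degree_le ?_ (by omega)⟩
    · exact (natDegree_C_mul_le _ _).trans (by omega)
    · rw [mul_comm X, mul_assoc]
      exact (natDegree_C_mul_le _ _).trans hXA

theorem coeff_zero_schurAB_snd : ∀ j, (schurAB γ n j).2.coeff 0 = 1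
  | 0 => by simp [schurAB]
  | j + 1 => by simp [schurAB, mul_assoc, coeff_zero_schurAB_snd j]

theorem sharp_schurAB_succ_fst (j : ℕ) :
    sharp (j + 1) (schurAB γ n (j + 1)).1 = sharp j (schurAB γ n j).1
      + C (starRingEnd ℂ (γ (n - j - 1))) * (X * sharp j (schurAB γ n j).2) :=
  sharp_X_mul_add_C_mul (natDegree_schurAB_le γ n j).1 (natDegree_schurAB_le γ n j).2 _

theorem sharp_schurAB_succ_snd (j : ℕ) :
    sharp (j + 1) (schurAB γ n (j + 1)).2 = C (γ (n - j - 1)) * sharp j (schurAB γ n j).1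
      + X * sharp j (schurAB γ n j).2 := by
  obtain ⟨hA, hB⟩ := natDegree_schurAB_le γ n j
  have h : (schurAB γ n (j + 1)).2 = X * (C (starRingEnd ℂ (γ (n - j - 1))) * (schurAB γ n j).1)
      + C 1 * (schurAB γ n j).2 := by
    rw [C_1, one_mul, ← mul_assoc]; rfl
  rw [h, sharp_X_mul_add_C_mul ((natDegree_C_mul_le _ _).trans hA) hB, sharp_C_mul,
    Complex.conj_conj, map_one, C_1, one_mul]

theorem exists_schurAB_det_eq_C_mul_X_pow : ∀ j, ∃ c : ℂ,
    (schurAB γ n j).2 * sharp j (schurAB γ n j).2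
      - (schurAB γ n j).1 * sharp j (schurAB γ n j).1 = C c * X ^ j
  | 0 => ⟨1 - γ n * starRingEnd ℂ (γ n), by simp [schurAB, sharp]⟩
  | j + 1 => by
    obtain ⟨c, hc⟩ := exists_schurAB_det_eq_C_mul_X_pow j
    set g := γ (n - j - 1)
    refine ⟨(1 - g * starRingEnd ℂ g) * c, ?_⟩
    rw [sharp_schurAB_succ_fst, sharp_schurAB_succ_snd]
    simp only [schurAB, map_mul, map_sub, map_one]
    linear_combination (X * (1 - C g * C (starRingEnd ℂ g))) * hc

end SchurAB

theorem coeff_numerator {n ℓ : ℕ} {A : ℂ[X]} (B : ℂ[X]) (hA : A.natDegree ≤ n)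
    (β α : ℕ → ℂ) (hℓ : ℓ < n) :
    (X * sharp n B * ∑ j ∈ range n, C (β j) * X ^ j
        + A * ∑ j ∈ range (n + 1), C (α j) * X ^ j).coeff (n + 1 + ℓ)
      = ∑ j ∈ range (n - ℓ), (starRingEnd ℂ (B.coeff (n - ℓ - j - 1)) * β (n - j - 1)
          + A.coeff (ℓ + j + 1) * α (n - j)) := by
  obtain ⟨m, rfl⟩ : ∃ m, n = m + 1 := ⟨n - 1, by omega⟩
  have hNE : (sharp (m + 1) B * ∑ j ∈ range (m + 1), C (β j) * X ^ j).coeff (m + (ℓ + 1))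
      = ∑ j ∈ range (m + 1 - ℓ),
          starRingEnd ℂ (B.coeff (m + 1 - ℓ - j - 1)) * β (m + 1 - j - 1) := by
    rw [coeff_mul_add_of_natDegree_le (natDegree_sharp_le _ B)
      (natDegree_sum_C_mul_X_pow_le β m) (by omega), show m + 1 + 1 - (ℓ + 1) = m + 1 - ℓ by omega]
    refine sum_congr rfl fun j hj => ?_
    rw [mem_range] at hj
    rw [coeff_sharp, if_pos (by omega), coeff_sum_C_mul_X_pow, if_pos (by omega),
      show m + 1 - (ℓ + 1 + j) = m + 1 - ℓ - j - 1 by omega, show m - j = m + 1 - j - 1 by omega]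
  have hDE : (A * ∑ j ∈ range (m + 1 + 1), C (α j) * X ^ j).coeff (m + 1 + (ℓ + 1))
      = ∑ j ∈ range (m + 1 - ℓ), A.coeff (ℓ + j + 1) * α (m + 1 - j) := by
    rw [coeff_mul_add_of_natDegree_le hA (natDegree_sum_C_mul_X_pow_le α (m + 1)) (by omega),
      show m + 1 + 1 - (ℓ + 1) = m + 1 - ℓ by omega]
    refine sum_congr rfl fun j hj => ?_
    rw [mem_range] at hj
    rw [coeff_sum_C_mul_X_pow, if_pos (by omega), show ℓ + 1 + j = ℓ + j + 1 by omega]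
  rw [coeff_add, mul_assoc, show m + 1 + 1 + ℓ = m + (ℓ + 1) + 1 by omega, coeff_X_mul, hNE,
    show m + (ℓ + 1) + 1 = m + 1 + (ℓ + 1) by omega, hDE, sum_add_distrib]

theorem natDegree_numerator_le {n : ℕ} {A : ℂ[X]} (B : ℂ[X]) (hA : A.natDegree ≤ n)
    (NE DE : ℂ[X]) (hNE : (X * NE).natDegree ≤ n) (hDE : DE.natDegree ≤ n) :
    (X * sharp n B * NE + A * DE).natDegree ≤ n + n := by
  rw [mul_comm X, mul_assoc]
  exact natDegree_add_le_of_degree_le (natDegree_mul_le_of_le (natDegree_sharp_le n B) hNE)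
    (natDegree_mul_le_of_le hA hDE)

theorem natDegree_denominator_le_of_numerator (γ : ℕ → ℂ) (n : ℕ) {NE DE : ℂ[X]}
    (hDE : DE.natDegree ≤ n)
    (hN : (X * sharp n (schurAB γ n n).2 * NE + (schurAB γ n n).1 * DE).natDegree ≤ n) :
    (X * sharp n (schurAB γ n n).1 * NE + (schurAB γ n n).2 * DE).natDegree ≤ n := by
  set A := (schurAB γ n n).1
  set B := (schurAB γ n n).2
  obtain ⟨c, hc⟩ := exists_schurAB_det_eq_C_mul_X_pow γ n n
  have key : (X * sharp n A * NE + B * DE) * sharp n B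
      = (X * sharp n B * NE + A * DE) * sharp n A + C c * X ^ n * DE := by
    rw [← hc]; ring
  have hlead : (sharp n B).coeff n ≠ 0 := by
    rw [coeff_sharp_self, coeff_zero_schurAB_snd, map_one]; exact one_ne_zero
  have hS : sharp n B ≠ 0 := by
    rintro h
    simp [h] at hlead
  refine natDegree_le_of_natDegree_mul_le hS ?_
  rw [key]
  refine natDegree_add_le_of_degree_le (natDegree_mul_le_of_le hN (natDegree_sharp_le n A)) ?_
    |>.trans (Nat.add_le_add_left (le_natDegree_of_ne_zero hlead) n)
  exact natDegree_mul_le_of_le ((natDegree_C_mul_le _ _).trans (natDegree_X_pow_le n)) hDE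

theorem stmt_16_general (n : ℕ) (γ : ℕ → ℂ)
    (a b : ℕ → ℂ) (ha : ∀ j, a j = ((schurAB γ n n).1).coeff j)
    (hb : ∀ j, b j = ((schurAB γ n n).2).coeff j)
    (β α : ℕ → ℂ)
    (NE DE : Polynomial ℂ)
    (hNE : NE = ∑ j ∈ Finset.range n, C (β j) * X ^ j)
    (hDE : DE = ∑ j ∈ Finset.range (n + 1), C (α j) * X ^ j) :
    ((X * sharp n (schurAB γ n n).2 * NE + (schurAB γ n n).1 * DE).natDegree ≤ n ∧
     (X * sharp n (schurAB γ n n).1 * NE + (schurAB γ n n).2 * DE).natDegree ≤ n) ↔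
    ∀ ℓ < n, ∑ j ∈ Finset.range (n - ℓ),
      (starRingEnd ℂ (b (n - ℓ - j - 1)) * β (n - j - 1) + a (ℓ + j + 1) * α (n - j)) = 0 := by
  have hA := (natDegree_schurAB_le γ n n).1
  have hDEdeg : DE.natDegree ≤ n := hDE ▸ natDegree_sum_C_mul_X_pow_le α n
  have hN : (X * sharp n (schurAB γ n n).2 * NE + (schurAB γ n n).1 * DE).natDegree ≤ n ↔
      ∀ ℓ < n, ∑ j ∈ range (n - ℓ),
        (starRingEnd ℂ (b (n - ℓ - j - 1)) * β (n - j - 1) + a (ℓ + j + 1) * α (n - j)) = 0 := by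
    rw [natDegree_le_iff_coeff_add_eq_zero (natDegree_numerator_le _ hA NE DE
      (hNE ▸ natDegree_X_mul_sum_C_mul_X_pow_le β n) hDEdeg)]
    refine forall₂_congr fun ℓ hℓ => ?_
    rw [hNE, hDE, coeff_numerator _ hA β α hℓ]
    simp only [ha, hb]
  exact ⟨fun h => hN.1 h.1,
    fun h => ⟨hN.2 h, natDegree_denominator_le_of_numerator γ n hDEdeg (hN.2 h)⟩⟩

/-- with `N_E = Σ_{j<n} β_j z^j` and `D_E = Σ_{j≤n} α_j z^j`, the
polynomials `N_f = z·B_n^{♯n}·N_E + A_n·D_E` and `D_f = z·A_n^{♯n}·N_E + B_n·D_E` both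
have degree at most `n` if and only if for every `0 ≤ ℓ ≤ n-1`:
`Σ_{j=0}^{n-ℓ-1} ( conj(b_{n-ℓ-j-1})·β_{n-j-1} + a_{ℓ+j+1}·α_{n-j} ) = 0`,
where `a_j`, `b_j` are the coefficients of `A_n`, `B_n`. -/
theorem stmt_16 (n : ℕ) (hn : 1 ≤ n) (γ : ℕ → ℂ)
    (hγ : ∀ j ≤ n, ‖γ j‖ < 1)
    (a b : ℕ → ℂ) (ha : ∀ j, a j = ((schurAB γ n n).1).coeff j)
    (hb : ∀ j, b j = ((schurAB γ n n).2).coeff j)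
    (β α : ℕ → ℂ)
    (NE DE : Polynomial ℂ)
    (hNE : NE = ∑ j ∈ Finset.range n, C (β j) * X ^ j)
    (hDE : DE = ∑ j ∈ Finset.range (n + 1), C (α j) * X ^ j) :
    ((X * sharp n (schurAB γ n n).2 * NE + (schurAB γ n n).1 * DE).natDegree ≤ n ∧
     (X * sharp n (schurAB γ n n).1 * NE + (schurAB γ n n).2 * DE).natDegree ≤ n) ↔
    ∀ ℓ < n, ∑ j ∈ Finset.range (n - ℓ),
      (starRingEnd ℂ (b (n - ℓ - j - 1)) * β (n - j - 1) + a (ℓ + j + 1) * α (n - j)) = 0 :=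
  stmt_16_general n γ a b ha hb β α NE DE hNE hDE
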